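/- arXiv:1504.02717 — 3 statements merged into one kernel-verified Lean document; each statement's English description precedes it below -/
import Mathlib

section
/- A quadratic normalisation (S, N) is of class (4, 3) if and only if the domino rule is valid for N̄. -/
namespace QN

variable {S A : Type*}

/-- A normalisation: a length-preserving map `N` on words over `S` fixing
length-one words and satisfying `N (u ++ N w ++ v) = N (u ++ w ++ v)`. -/
structure Normalisation (S : Type*) where
  N : List S → List S
  length_eq : ∀ w : List S, (N w).length = w.length
  single : ∀ s : S, N [s] = [s]
  mid : ∀ u v w : List S, N (u ++ N w ++ v) = N (u ++ w ++ v)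

/-- Extract the two entries of a length-two word (with a default fallback). -/
def pairOf : List S → S → S → S × S
  | [x, y], _, _ => (x, y)
  | _, s, t => (s, t)

/-- The restriction `N̄` of `N` to length-two words, as a map on pairs. -/
def nbar (N : List S → List S) (s t : S) : S × S :=
  pairOf (N [s, t]) s t

/-- Apply `f` to the length-two factor at (1-indexed) position `i`;
out-of-range positions act as the identity. -/
def applyAt (f : S → S → S × S) : ℕ → List S → List S
  | 1, a :: b :: l => (f a b).1 :: (f a b).2 :: l
  | n + 2, a :: l => a :: applyAt f (n + 1) l
  | _, l => l

/-- `φ_u`: apply `φ` at the successive positions of `u`, leftmost entry of `u` first. -/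
def applySeq (f : S → S → S × S) (u : List ℕ) (w : List S) : List S :=
  u.foldl (fun w i => applyAt f i w) w

/-- A word is `N`-normal iff all its length-two factors are `N`-normal. -/
def LocallyNormal (N : List S → List S) : Prop :=
  ∀ w : List S, N w = w ↔ ∀ u v : List S, ∀ s t : S, w = u ++ s :: t :: v → N [s, t] = [s, t]

/-- Every word is normalised by finitely many applications of `N̄` at positions. -/
def NbarGenerated (N : List S → List S) : Prop :=
  ∀ w : List S, ∃ u : List ℕ, N w = applySeq (nbar N) u w

/-- A normalisation map is quadratic if it satisfies the two locality conditions. -/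
def Quadratic (N : List S → List S) : Prop :=
  LocallyNormal N ∧ NbarGenerated N

/-- `e` is `N`-neutral: `N (w·e) = N (e·w) = N w · e`. -/
def Neutral (N : List S → List S) (e : S) : Prop :=
  ∀ w : List S, N (w ++ [e]) = N w ++ [e] ∧ N (e :: w) = N w ++ [e]

/-- The alternating sequence of length `m` starting with `k ∈ {1,2}`. -/
def altFrom : ℕ → ℕ → List ℕ
  | _, 0 => []
  | k, n + 1 => k :: altFrom (3 - k) n

/-- `(S, N)` is of left-class `c`: `N = N̄_{α_c}` on length-three words. -/
def LeftClass (N : List S → List S) (c : ℕ) : Prop :=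
  ∀ w : List S, w.length = 3 → N w = applySeq (nbar N) (altFrom 1 c) w

/-- `(S, N)` is of right-class `c`: `N = N̄_{ᾱ_c}` on length-three words. -/
def RightClass (N : List S → List S) (c : ℕ) : Prop :=
  ∀ w : List S, w.length = 3 → N w = applySeq (nbar N) (altFrom 2 c) w

/-- The domino rule is valid for `f`. -/
def DominoRule (f : S → S → S × S) : Prop :=
  ∀ s₁ s₂ s₁' s₂' t₀ t₁ t₂ : S,
    f t₀ s₁ = (s₁', t₁) → f t₁ s₂ = (s₂', t₂) →
    f s₁ s₂ = (s₁, s₂) → f s₁' s₂' = (s₁', s₂')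

/-- The sequences `δ_p`: `δ₁ = ε` and `δ_p = sh(δ_{p-1})·1·2·⋯·(p-1)`. -/
def delta : ℕ → List ℕ
  | 0 => []
  | 1 => []
  | p + 2 => (delta (p + 1)).map (· + 1) ++ List.range' 1 (p + 1)

/-- Apply `N` to the length-`k` factor beginning at (1-indexed) position `i`. -/
def applyFactorAt (N : List S → List S) (k : ℕ) : ℕ → List S → List S
  | 0, w => w
  | i + 1, w => w.take i ++ N ((w.drop i).take k) ++ w.drop (i + k)

/-- Apply `N` to length-`k` factors at the successive positions of `u`. -/
def applyFactorSeq (N : List S → List S) (k : ℕ) (u : List ℕ) (w : List S) : List S :=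
  u.foldl (fun w i => applyFactorAt N k i w) w

/-- One-step rewriting relation of a rewriting system `R`. -/
def RStep (R : List A → List A → Prop) (x y : List A) : Prop :=
  ∃ u v w w', R w w' ∧ x = u ++ w ++ v ∧ y = u ++ w' ++ v

/-- A rewriting system is terminating if it admits no infinite rewriting sequence. -/
def Terminating (R : List A → List A → Prop) : Prop :=
  ¬ ∃ f : ℕ → List A, ∀ n, RStep R (f n) (f (n + 1))

/-- Confluence of a rewriting system. -/
def Confluent (R : List A → List A → Prop) : Prop :=
  ∀ w w₁ w₂ : List A, Relation.ReflTransGen (RStep R) w w₁ →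
    Relation.ReflTransGen (RStep R) w w₂ →
    ∃ w', Relation.ReflTransGen (RStep R) w₁ w' ∧ Relation.ReflTransGen (RStep R) w₂ w'

/-- A word is `R`-normal if no rule of `R` applies to any of its factors. -/
def RNormal (R : List A → List A → Prop) (w : List A) : Prop :=
  ¬ ∃ w', RStep R w w'

/-- Every word rewrites to some `R`-normal word. -/
def Normalising (R : List A → List A → Prop) : Prop :=
  ∀ w : List A, ∃ w', Relation.ReflTransGen (RStep R) w w' ∧ RNormal R w'

/-- A rewriting system is quadratic if all its rules relate length-two words. -/
def QuadraticRS (R : List A → List A → Prop) : Prop :=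
  ∀ w w', R w w' → w.length = 2 ∧ w'.length = 2

/-- A rewriting system is reduced. -/
def ReducedRS (R : List A → List A → Prop) : Prop :=
  ∀ w w', R w w' → RNormal R w' ∧ RNormal (fun a b => R a b ∧ ¬(a = w ∧ b = w')) w

/-- The rewriting system associated with a quadratic normalisation:
one rule `s·t → N̄(s·t)` for each non-`N`-normal length-two word. -/
def rules (N : List S → List S) : List S → List S → Prop :=
  fun w w' => ∃ s t : S, w = [s, t] ∧ w' = N [s, t] ∧ w' ≠ w

/-- `π_e`: delete all occurrences of `e`, landing in words over `S∖{e}`. -/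
noncomputable def pie (e : S) (w : List S) : List {s : S // s ≠ e} :=
  w.filterMap fun s => @dite _ (s = e) (Classical.dec _) (fun _ => none) (fun h => some ⟨s, h⟩)

/-- The rewriting system `R_e` over `S∖{e}`. -/
def rulesE (N : List S → List S) (e : S) :
    List {s : S // s ≠ e} → List {s : S // s ≠ e} → Prop :=
  fun w w' => ∃ s t : {s : S // s ≠ e},
    w = [s, t] ∧ N [s.1, t.1] ≠ [s.1, t.1] ∧ w' = pie e (N [s.1, t.1])

/-- `M` admits the monoid presentation `⟨S ∣ r⟩`. -/
def PresentedBy (M : Type*) [Monoid M] (S : Type*) (r : List S → List S → Prop) : Prop :=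
  Nonempty ((conGen fun a b : FreeMonoid S => r a.toList b.toList).Quotient ≃* M)

/-- Left-divisibility in a monoid. -/
def LeftDvd {M : Type*} [Monoid M] (f g : M) : Prop :=
  ∃ g', f * g' = g

/-- The pair `s₁, s₂` is `S`-normal (greedy). -/
def SNormalPair {M : Type*} [Monoid M] (S : Set M) (s₁ s₂ : M) : Prop :=
  ∀ s ∈ S, ∀ f : M, LeftDvd s (f * s₁ * s₂) → LeftDvd s (f * s₁)

/-- A word over `S` is `S`-normal if all its adjacent pairs are. -/
def SNormalWord {M : Type*} [Monoid M] (S : Set M) (w : List S) : Prop :=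
  ∀ u v : List S, ∀ a b : S, w = u ++ a :: b :: v → SNormalPair S (a : M) (b : M)

end QN

open QN

section Aux

variable {S : Type*} (ns : Normalisation S)

lemma aux_idem (w : List S) : ns.N (ns.N w) = ns.N w := by
  simpa using ns.mid [] [] w

lemma aux_nbar_eq (s t : S) :
    ns.N [s, t] = [(nbar ns.N s t).1, (nbar ns.N s t).2] := by
  have h := ns.length_eq [s, t]
  obtain ⟨a, b, hab⟩ := List.length_eq_two.mp h
  simp [nbar, hab, pairOf]

lemma aux_pair_eq {x y x' y' : S} (h : nbar ns.N x y = (x', y')) :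
    ns.N [x, y] = [x', y'] := by
  rw [aux_nbar_eq, h]

lemma aux_pair_normal {x y x' y' : S} (h : nbar ns.N x y = (x', y')) :
    ns.N [x', y'] = [x', y'] := by
  have := aux_idem ns [x, y]
  rwa [aux_pair_eq ns h] at this

lemma aux_fix_of_normal {x y : S} (h : ns.N [x, y] = [x, y]) :
    nbar ns.N x y = (x, y) := by
  rw [nbar, h]; rfl

lemma aux_stepL {x y x' y' : S} (h : nbar ns.N x y = (x', y')) (z : S) :
    ns.N [x', y', z] = ns.N [x, y, z] := by
  have := ns.mid [] [z] [x, y]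
  rw [aux_pair_eq ns h] at this
  simpa using this

lemma aux_stepR {y z y' z' : S} (h : nbar ns.N y z = (y', z')) (x : S) :
    ns.N [x, y', z'] = ns.N [x, y, z] := by
  have := ns.mid [x] [] [y, z]
  rw [aux_pair_eq ns h] at this
  simpa using this

lemma aux_three_decomp {u v : List S} {s t x y z : S}
    (h : u ++ s :: t :: v = [x, y, z]) :
    (s = x ∧ t = y) ∨ (s = y ∧ t = z) := by
  match u with
  | [] =>
    simp only [List.nil_append, List.cons.injEq] at h
    exact Or.inl ⟨h.1, h.2.1⟩
  | [a] =>
    simp only [List.cons_append, List.nil_append, List.cons.injEq] at h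
    exact Or.inr ⟨h.2.1, h.2.2.1⟩
  | a :: b :: u' =>
    have := congrArg List.length h
    simp at this
    omega

lemma aux_normal3 (hloc : LocallyNormal ns.N) {x y z : S}
    (h1 : ns.N [x, y] = [x, y]) (h2 : ns.N [y, z] = [y, z]) :
    ns.N [x, y, z] = [x, y, z] := by
  rw [hloc]
  intro u v s t h
  rcases aux_three_decomp h.symm with ⟨rfl, rfl⟩ | ⟨rfl, rfl⟩ <;> assumption

lemma aux_applyAt_one (f : S → S → S × S) (a b : S) (l : List S) :
    applyAt f 1 (a :: b :: l) = (f a b).1 :: (f a b).2 :: l := rfl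

lemma aux_applyAt_two (f : S → S → S × S) (a : S) (l : List S) :
    applyAt f 2 (a :: l) = a :: applyAt f 1 l := rfl

lemma aux_seq212 (f : S → S → S × S) {a b c b' c' a₁ b₁ b₂ c₂ : S}
    (h1 : f b c = (b', c')) (h2 : f a b' = (a₁, b₁)) (h3 : f b₁ c' = (b₂, c₂)) :
    applySeq f (altFrom 2 3) [a, b, c] = [a₁, b₂, c₂] := by
  show applyAt f 2 (applyAt f 1 (applyAt f 2 [a, b, c])) = _
  rw [aux_applyAt_two, aux_applyAt_one, h1, aux_applyAt_one, h2,
    aux_applyAt_two, aux_applyAt_one, h3]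

lemma aux_seq1212 (f : S → S → S × S) {a b c a' b' b₁ c₁ a₂ b₂ b₃ c₃ : S}
    (h1 : f a b = (a', b')) (h2 : f b' c = (b₁, c₁)) (h3 : f a' b₁ = (a₂, b₂))
    (h4 : f b₂ c₁ = (b₃, c₃)) :
    applySeq f (altFrom 1 4) [a, b, c] = [a₂, b₃, c₃] := by
  show applyAt f 2 (applyAt f 1 (applyAt f 2 (applyAt f 1 [a, b, c]))) = _
  rw [aux_applyAt_one, h1, aux_applyAt_two, aux_applyAt_one, h2,
    aux_applyAt_one, h3, aux_applyAt_two, aux_applyAt_one, h4]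

end Aux

/-- A quadratic normalisation `(S, N)` is of class `(4, 3)` iff the domino
rule is valid for `N̄`. -/
theorem statement9 {S : Type*} (ns : Normalisation S) (hq : Quadratic ns.N) :
    (LeftClass ns.N 4 ∧ RightClass ns.N 3) ↔ DominoRule (nbar ns.N) := by
  obtain ⟨hloc, -⟩ := hq
  constructor
  · rintro ⟨-, hrc⟩
    intro s₁ s₂ s₁' s₂' t₀ t₁ t₂ h1 h2 h3
    have hw := hrc [t₀, s₁, s₂] rfl
    rw [aux_seq212 (nbar ns.N) h3 h1 h2] at hw
    -- N [t₀, s₁, s₂] = [s₁', s₂', t₂], which is normal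
    have hnorm : ns.N [s₁', s₂', t₂] = [s₁', s₂', t₂] := by
      have := aux_idem ns [t₀, s₁, s₂]
      rwa [hw] at this
    have hfac := (hloc [s₁', s₂', t₂]).mp hnorm [] [t₂] s₁' s₂' rfl
    exact aux_fix_of_normal ns hfac
  · intro hd
    constructor
    · intro w hw3
      obtain ⟨a, b, c, rfl⟩ := List.length_eq_three.mp hw3
      rcases h1 : nbar ns.N a b with ⟨a', b'⟩
      rcases h2 : nbar ns.N b' c with ⟨b₁, c₁⟩
      rcases h3 : nbar ns.N a' b₁ with ⟨a₂, b₂⟩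
      rcases h4 : nbar ns.N b₂ c₁ with ⟨b₃, c₃⟩
      have hfix : nbar ns.N b₁ c₁ = (b₁, c₁) :=
        aux_fix_of_normal ns (aux_pair_normal ns h2)
      have hdom : nbar ns.N a₂ b₃ = (a₂, b₃) := hd b₁ c₁ a₂ b₃ a' b₂ c₃ h3 h4 hfix
      have hn1 : ns.N [a₂, b₃] = [a₂, b₃] := aux_pair_eq ns hdom
      have hn2 : ns.N [b₃, c₃] = [b₃, c₃] := aux_pair_normal ns h4
      calc ns.N [a, b, c] = ns.N [a', b', c] := (aux_stepL ns h1 c).symm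
        _ = ns.N [a', b₁, c₁] := (aux_stepR ns h2 a').symm
        _ = ns.N [a₂, b₂, c₁] := (aux_stepL ns h3 c₁).symm
        _ = ns.N [a₂, b₃, c₃] := (aux_stepR ns h4 a₂).symm
        _ = [a₂, b₃, c₃] := aux_normal3 ns hloc hn1 hn2
        _ = applySeq (nbar ns.N) (altFrom 1 4) [a, b, c] :=
          (aux_seq1212 (nbar ns.N) h1 h2 h3 h4).symm
    · intro w hw3
      obtain ⟨a, b, c, rfl⟩ := List.length_eq_three.mp hw3
      rcases h1 : nbar ns.N b c with ⟨b', c'⟩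
      rcases h2 : nbar ns.N a b' with ⟨a₁, b₁⟩
      rcases h3 : nbar ns.N b₁ c' with ⟨b₂, c₂⟩
      have hfix : nbar ns.N b' c' = (b', c') :=
        aux_fix_of_normal ns (aux_pair_normal ns h1)
      have hdom : nbar ns.N a₁ b₂ = (a₁, b₂) := hd b' c' a₁ b₂ a b₁ c₂ h2 h3 hfix
      have hn1 : ns.N [a₁, b₂] = [a₁, b₂] := aux_pair_eq ns hdom
      have hn2 : ns.N [b₂, c₂] = [b₂, c₂] := aux_pair_normal ns h3
      calc ns.N [a, b, c] = ns.N [a, b', c'] := (aux_stepR ns h1 a).symm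
        _ = ns.N [a₁, b₁, c'] := (aux_stepL ns h2 c').symm
        _ = ns.N [a₁, b₂, c₂] := (aux_stepR ns h3 a₁).symm
        _ = [a₁, b₂, c₂] := aux_normal3 ns hloc hn1 hn2
        _ = applySeq (nbar ns.N) (altFrom 2 3) [a, b, c] :=
          (aux_seq212 (nbar ns.N) h1 h2 h3).symm
end

section
/- If (S, N) is a quadratic normalisation such that the domino rule is valid for N̄, then for every t in S and every N-normal word s₁·…·s_q (q ≥ 1), one has N(t·s₁·…·s_q) = N̄_{1·2·…·(q−1)·q}(t·s₁·…·s_q). -/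
namespace QN

variable {S A : Type*}

lemma nbar_spec (ns : Normalisation S) (s t : S) :
    ns.N [s, t] = [(nbar ns.N s t).1, (nbar ns.N s t).2] := by
  have h := ns.length_eq [s, t]
  rcases e : ns.N [s, t] with _ | ⟨x, _ | ⟨y, _ | ⟨z, l⟩⟩⟩ <;>
    rw [e] at h <;> simp at h
  simp [nbar, e, pairOf]

lemma nbar_eq_iff (ns : Normalisation S) (a b : S) :
    nbar ns.N a b = (a, b) ↔ ns.N [a, b] = [a, b] := by
  constructor
  · intro h
    rw [nbar_spec ns a b, h]
  · intro h
    simp [nbar, h, pairOf]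

lemma N_N (ns : Normalisation S) (v : List S) : ns.N (ns.N v) = ns.N v := by
  have := ns.mid [] [] v
  simpa using this

lemma N_cons_congr (ns : Normalisation S) (a : S) {x y : List S}
    (h : ns.N x = ns.N y) : ns.N (a :: x) = ns.N (a :: y) := by
  have hx := ns.mid [a] [] x
  have hy := ns.mid [a] [] y
  simp only [List.append_nil, List.singleton_append] at hx hy
  rw [← hx, ← hy, h]

lemma applyAt_zero (f : S → S → S × S) (l : List S) : applyAt f 0 l = l := rfl

lemma applyAt_one (f : S → S → S × S) (a b : S) (l : List S) :
    applyAt f 1 (a :: b :: l) = (f a b).1 :: (f a b).2 :: l := rfl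

lemma applyAt_succ_succ (f : S → S → S × S) (n : ℕ) (a : S) (l : List S) :
    applyAt f (n + 2) (a :: l) = a :: applyAt f (n + 1) l := rfl

lemma N_applyAt (ns : Normalisation S) :
    ∀ (v : List S) (i : ℕ), ns.N (applyAt (nbar ns.N) i v) = ns.N v := by
  intro v
  induction v with
  | nil => intro i; rcases i with _ | _ | n <;> rfl
  | cons a l ih =>
    intro i
    rcases i with _ | _ | n
    · rfl
    · rcases l with _ | ⟨b, l⟩
      · rfl
      · rw [applyAt_one]
        have hmid := ns.mid [] l [a, b]
        simp only [List.nil_append] at hmid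
        rw [nbar_spec ns a b] at hmid
        simpa using hmid
    · rw [applyAt_succ_succ]
      exact N_cons_congr ns a (ih (n + 1))

lemma applySeq_cons (f : S → S → S × S) (i : ℕ) (u : List ℕ) (v : List S) :
    applySeq f (i :: u) v = applySeq f u (applyAt f i v) := rfl

lemma N_applySeq (ns : Normalisation S) :
    ∀ (u : List ℕ) (v : List S),
      ns.N (applySeq (nbar ns.N) u v) = ns.N v := by
  intro u
  induction u with
  | nil => intro v; rfl
  | cons i u ih =>
    intro v
    rw [applySeq_cons, ih, N_applyAt]

lemma applySeq_map_succ (f : S → S → S × S) :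
    ∀ (u : List ℕ), (∀ i ∈ u, 1 ≤ i) → ∀ (a : S) (v : List S),
      applySeq f (u.map (· + 1)) (a :: v) = a :: applySeq f u v := by
  intro u
  induction u with
  | nil => intro _ a v; rfl
  | cons i u ih =>
    intro h a v
    obtain ⟨n, rfl⟩ : ∃ n, i = n + 1 := by
      have := h i (by simp); exact ⟨i - 1, by omega⟩
    simp only [List.map_cons, applySeq_cons, applyAt_succ_succ]
    exact ih (fun j hj => h j (by simp [hj])) a _

lemma range'_shift : ∀ (n s : ℕ),
    List.range' (s + 1) n = (List.range' s n).map (· + 1) := by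
  intro n
  induction n with
  | zero => intro s; rfl
  | succ n ih =>
    intro s
    rw [List.range'_succ, List.range'_succ, List.map_cons, ih (s + 1)]

def pushAll (f : S → S → S × S) : S → List S → List S × S
  | t, [] => ([], t)
  | t, s :: w => ((f t s).1 :: (pushAll f (f t s).2 w).1, (pushAll f (f t s).2 w).2)

lemma pushAll_nil (f : S → S → S × S) (t : S) : pushAll f t [] = ([], t) := rfl

lemma pushAll_cons (f : S → S → S × S) (t s : S) (w : List S) :
    pushAll f t (s :: w)
      = ((f t s).1 :: (pushAll f (f t s).2 w).1, (pushAll f (f t s).2 w).2) := rfl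

lemma applySeq_range' (f : S → S → S × S) :
    ∀ (w : List S) (t : S),
      applySeq f (List.range' 1 w.length) (t :: w)
        = (pushAll f t w).1 ++ [(pushAll f t w).2] := by
  intro w
  induction w with
  | nil => intro t; rfl
  | cons s w ih =>
    intro t
    have h1 : List.range' 1 (s :: w).length = 1 :: List.range' 2 w.length := by
      rw [List.length_cons, List.range'_succ]
    rw [h1, applySeq_cons, applyAt_one]
    have h2 : List.range' 2 w.length = (List.range' 1 w.length).map (· + 1) :=
      range'_shift w.length 1
    rw [h2, applySeq_map_succ f _ (fun i hi => (List.mem_range'_1.mp hi).1),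
      ih (f t s).2, pushAll_cons]
    rfl

lemma pushAll_normal (ns : Normalisation S) (hd : DominoRule (nbar ns.N)) :
    ∀ (w : List S) (t : S),
      (∀ u v a b, w = u ++ a :: b :: v → ns.N [a, b] = [a, b]) →
      ∀ u v a b,
        (pushAll (nbar ns.N) t w).1 ++ [(pushAll (nbar ns.N) t w).2]
          = u ++ a :: b :: v → ns.N [a, b] = [a, b] := by
  intro w
  induction w with
  | nil =>
    intro t _ u v a b h
    rw [pushAll_nil] at h
    exfalso
    have := congrArg List.length h
    simp at this
    omega
  | cons s w ih =>
    intro t hw u v a b h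
    have hw' : ∀ u v a b, w = u ++ a :: b :: v → ns.N [a, b] = [a, b] :=
      fun u v a b hh => hw (s :: u) v a b (by rw [hh]; rfl)
    rw [pushAll_cons] at h
    simp only [List.cons_append] at h
    rcases u with _ | ⟨c, u⟩
    · simp only [List.nil_append, List.cons.injEq] at h
      obtain ⟨ha, hrest⟩ := h
      rcases w with _ | ⟨s₂, w⟩
      · -- rest = [last] with last = (nbar t s).2
        rw [pushAll_nil] at hrest
        simp only [List.nil_append, List.cons.injEq] at hrest
        obtain ⟨hb, -⟩ := hrest
        subst ha; subst hb
        rw [← nbar_spec ns t s, N_N]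
      · rw [pushAll_cons] at hrest
        simp only [List.cons_append, List.cons.injEq] at hrest
        obtain ⟨hb, -⟩ := hrest
        subst ha; subst hb
        have h1 : nbar ns.N t s = ((nbar ns.N t s).1, (nbar ns.N t s).2) := rfl
        have h2 : nbar ns.N (nbar ns.N t s).2 s₂
            = ((nbar ns.N (nbar ns.N t s).2 s₂).1,
               (nbar ns.N (nbar ns.N t s).2 s₂).2) := rfl
        have h3 : nbar ns.N s s₂ = (s, s₂) :=
          (nbar_eq_iff ns s s₂).mpr (hw [] w s s₂ rfl)
        exact (nbar_eq_iff ns _ _).mp (hd s s₂ _ _ t _ _ h1 h2 h3)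
    · simp only [List.cons_append, List.cons.injEq] at h
      exact ih (nbar ns.N t s).2 hw' u v a b h.2



end QN


open QN
/-- If the domino rule is valid for `N̄`, then for `t ∈ S` and any
nonempty `N`-normal word `w = s₁·…·s_q`, `N(t·w) = N̄_{1·2·⋯·q}(t·w)`. -/
theorem statement10 {S : Type*} (ns : Normalisation S) (hq : Quadratic ns.N)
    (hd : DominoRule (nbar ns.N)) (t : S) (w : List S) (hw : w ≠ []) (hn : ns.N w = w) :
    ns.N (t :: w) = applySeq (nbar ns.N) (List.range' 1 w.length) (t :: w) := by
  have hA := applySeq_range' (nbar ns.N) w t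
  have hPN : ∀ u v a b, w = u ++ a :: b :: v → ns.N [a, b] = [a, b] := by
    intro u v a b hh
    exact (hq.1 w).mp hn u v a b hh
  have hrPN := pushAll_normal ns hd w t hPN
  have hr : ns.N ((pushAll (nbar ns.N) t w).1 ++ [(pushAll (nbar ns.N) t w).2])
      = (pushAll (nbar ns.N) t w).1 ++ [(pushAll (nbar ns.N) t w).2] :=
    (hq.1 _).mpr hrPN
  have hNseq := N_applySeq ns (List.range' 1 w.length) (t :: w)
  rw [hA] at hNseq
  rw [hA, ← hr]
  exact hNseq.symm
end

section
/- If (S, N) is a quadratic normalisation of class (4, 3), then for every p ≥ 1 and every length-p word w over S, one has N(w) = N̄_{δ_p}(w). -/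
/-! Right-class 3 says `N(t₀·s₁·s₂) = N̄_{2·1·2}(t₀·s₁·s₂)`. When `s₁·s₂` is normal the first
`N̄_2` does nothing, and normality of the first two letters of the result is the domino rule.
By the domino rule, pushing a letter `s` rightwards through the normal word `N(v)`, i.e. applying
`N̄` at positions `1, 2, …, |v|`, produces a word whose length-two factors are all normal; by
quadraticity it is therefore normal, so it is `N(s·N(v)) = N(s·v)`. As
`δ_{p+1} = sh(δ_p)·1·2·…·p`, induction on the length gives `N = N̄_{δ_p}`. -/

namespace QN

variable {S : Type*}

section Positions

variable (f : S → S → S × S)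

theorem length_applyAt (i : ℕ) (w : List S) : (applyAt f i w).length = w.length := by
  fun_induction applyAt f i w <;> simp_all

theorem length_applySeq (u : List ℕ) (w : List S) : (applySeq f u w).length = w.length := by
  induction u generalizing w with
  | nil => rfl
  | cons i u ih => exact (ih _).trans (length_applyAt f i w)

theorem applySeq_append (u u' : List ℕ) (w : List S) :
    applySeq f (u ++ u') w = applySeq f u' (applySeq f u w) :=
  List.foldl_append

theorem applyAt_succ_cons {i : ℕ} (hi : 1 ≤ i) (a : S) (l : List S) :
    applyAt f (i + 1) (a :: l) = a :: applyAt f i l := by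
  obtain ⟨m, rfl⟩ := Nat.exists_eq_add_of_le' hi
  rfl

theorem applySeq_map_succ_cons {u : List ℕ} (hu : ∀ i ∈ u, 1 ≤ i) (a : S) (l : List S) :
    applySeq f (u.map (· + 1)) (a :: l) = a :: applySeq f u l := by
  induction u generalizing l with
  | nil => rfl
  | cons i u ih =>
    simp only [List.forall_mem_cons] at hu
    simp only [List.map_cons, applySeq, List.foldl_cons] at ih ⊢
    rw [applyAt_succ_cons f hu.1, ih hu.2]

def sweep : S → List S → List S
  | t, [] => [t]
  | t, s :: v => (f t s).1 :: sweep (f t s).2 v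

theorem applySeq_range'_eq_sweep (t : S) (v : List S) :
    applySeq f (List.range' 1 v.length) (t :: v) = sweep f t v := by
  induction v generalizing t with
  | nil => rfl
  | cons s v ih =>
    have hrange : List.range' 1 (v.length + 1) = 1 :: (List.range' 1 v.length).map (· + 1) := by
      rw [List.range'_succ, ← List.map_add_range']
      simp only [Nat.add_comm 1]
    rw [List.length_cons, hrange]
    show applySeq f _ ((f t s).1 :: (f t s).2 :: v) = _
    rw [applySeq_map_succ_cons f (fun i hi => (List.mem_range'_1.mp hi).1), ih]
    rfl

theorem delta_succ (p : ℕ) : delta (p + 1) = (delta p).map (· + 1) ++ List.range' 1 p := by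
  cases p <;> rfl

theorem one_le_of_mem_delta {p i : ℕ} (hi : i ∈ delta p) : 1 ≤ i := by
  cases p with
  | zero => simp [delta] at hi
  | succ p =>
    rw [delta_succ, List.mem_append, List.mem_map, List.mem_range'_1] at hi
    omega

theorem applySeq_delta_succ (s : S) (v : List S) :
    applySeq f (delta (v.length + 1)) (s :: v) = sweep f s (applySeq f (delta v.length) v) := by
  rw [delta_succ, applySeq_append, applySeq_map_succ_cons f (fun _ => one_le_of_mem_delta),
    ← applySeq_range'_eq_sweep, length_applySeq]

theorem isChain_sweep (hdom : DominoRule f) (hidem : ∀ a b, f (f a b).1 (f a b).2 = f a b)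
    (t : S) {v : List S} (hv : v.IsChain fun a b => f a b = (a, b)) :
    (sweep f t v).IsChain fun a b => f a b = (a, b) := by
  induction v generalizing t with
  | nil => exact List.isChain_singleton t
  | cons s v ih =>
    cases v with
    | nil => exact List.isChain_pair.mpr (hidem t s)
    | cons s₂ v =>
      obtain ⟨hs, hv⟩ := List.isChain_cons_cons.mp hv
      refine List.isChain_cons_cons.mpr ⟨?_, ih (f t s).2 hv⟩
      exact hdom s s₂ _ _ t _ _ rfl rfl hs

end Positions

namespace Normalisation

variable (ns : Normalisation S)

theorem N_idem (w : List S) : ns.N (ns.N w) = ns.N w := by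
  simpa using ns.mid [] [] w

theorem N_cons_N (s : S) (v : List S) : ns.N (s :: ns.N v) = ns.N (s :: v) := by
  simpa using ns.mid [s] [] v

theorem N_pair (s t : S) : ns.N [s, t] = [(nbar ns.N s t).1, (nbar ns.N s t).2] := by
  have h := ns.length_eq [s, t]
  rcases hw : ns.N [s, t] with _ | ⟨a, _ | ⟨b, _ | ⟨c, l⟩⟩⟩ <;> simp_all [nbar, pairOf]

theorem nbar_eq_self_iff {s t : S} : nbar ns.N s t = (s, t) ↔ ns.N [s, t] = [s, t] := by
  rw [N_pair]
  simp [Prod.ext_iff]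

theorem nbar_nbar (s t : S) :
    nbar ns.N (nbar ns.N s t).1 (nbar ns.N s t).2 = nbar ns.N s t := by
  rw [ns.nbar_eq_self_iff, ← N_pair, N_idem]

theorem N_applyAt (i : ℕ) (w : List S) : ns.N (applyAt (nbar ns.N) i w) = ns.N w := by
  fun_induction applyAt (nbar ns.N) i w with
  | case1 a b l => simpa [N_pair] using ns.mid [] l [a, b]
  | case2 n a l ih => rw [← N_cons_N, ih, N_cons_N]
  | case3 => rfl

theorem N_applySeq (u : List ℕ) (w : List S) : ns.N (applySeq (nbar ns.N) u w) = ns.N w := by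
  induction u generalizing w with
  | nil => rfl
  | cons i u ih => exact (ih _).trans (ns.N_applyAt i w)

variable {ns}

theorem N_eq_self_iff_isChain (hloc : LocallyNormal ns.N) {w : List S} :
    ns.N w = w ↔ w.IsChain fun a b => nbar ns.N a b = (a, b) := by
  simp only [hloc w, List.isChain_iff_forall_rel_of_append_cons_cons, ns.nbar_eq_self_iff]
  exact ⟨fun h a b l₁ l₂ hw => h l₁ l₂ a b hw, fun h l₁ l₂ a b hw => h hw⟩

theorem dominoRule_nbar (hloc : LocallyNormal ns.N) (h3 : RightClass ns.N 3) :
    DominoRule (nbar ns.N) := by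
  intro s₁ s₂ s₁' s₂' t₀ t₁ t₂ h₁ h₂ hs
  have hN : ns.N [t₀, s₁, s₂] = [s₁', s₂', t₂] := by
    simp [h3 [t₀, s₁, s₂] rfl, altFrom, applySeq, applyAt, hs, h₁, h₂]
  have hnormal := (N_eq_self_iff_isChain hloc).mp (hN ▸ ns.N_idem [t₀, s₁, s₂])
  exact (List.isChain_cons_cons.mp hnormal).1

theorem N_cons_eq_sweep (hloc : LocallyNormal ns.N) (hdom : DominoRule (nbar ns.N))
    (s : S) (v : List S) : ns.N (s :: v) = sweep (nbar ns.N) s (ns.N v) := by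
  have hnormal := isChain_sweep _ hdom ns.nbar_nbar s
    ((N_eq_self_iff_isChain hloc).mp (ns.N_idem v))
  calc ns.N (s :: v) = ns.N (s :: ns.N v) := (ns.N_cons_N s v).symm
    _ = ns.N (sweep (nbar ns.N) s (ns.N v)) := by
      rw [← applySeq_range'_eq_sweep, N_applySeq]
    _ = sweep (nbar ns.N) s (ns.N v) := (N_eq_self_iff_isChain hloc).mpr hnormal

theorem N_eq_applySeq_delta (hloc : LocallyNormal ns.N) (hdom : DominoRule (nbar ns.N)) :
    ∀ w : List S, ns.N w = applySeq (nbar ns.N) (delta w.length) w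
  | [] => List.eq_nil_of_length_eq_zero (ns.length_eq [])
  | s :: v => by
    rw [List.length_cons, applySeq_delta_succ, ← N_eq_applySeq_delta hloc hdom v,
      N_cons_eq_sweep hloc hdom]

end Normalisation

end QN

open QN
theorem statement11_general {S : Type*} (ns : Normalisation S) (hq : Quadratic ns.N)
    (h3 : RightClass ns.N 3) :
    ∀ p : ℕ, 1 ≤ p → ∀ w : List S, w.length = p →
      ns.N w = applySeq (nbar ns.N) (delta p) w := by
  rintro p - w rfl
  exact ns.N_eq_applySeq_delta hq.1 (ns.dominoRule_nbar hq.1 h3) w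

/-- If `(S, N)` is a quadratic normalisation of class `(4, 3)`, then
`N(w) = N̄_{δ_p}(w)` for every length-`p` word `w` with `p ≥ 1`. -/
theorem statement11 {S : Type*} (ns : Normalisation S) (hq : Quadratic ns.N)
    (h4 : LeftClass ns.N 4) (h3 : RightClass ns.N 3) :
    ∀ p : ℕ, 1 ≤ p → ∀ w : List S, w.length = p →
      ns.N w = applySeq (nbar ns.N) (delta p) w :=
  statement11_general ns hq h3
end
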